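/- Let a ∈ ℂ^n be nonzero, x ∈ ℂ^n, and y_r ≥ 0 a real number. For a unimodular complex number ω (|ω| = 1), define x^ω = x + ((√(y_r)·ω − ⟨a,x⟩)/‖a‖₂²)·a. Let ω* = phase(⟨a,x⟩). Then for every ω ∈ ℂ with |ω| = 1, ‖x^{ω*} − x‖₂ ≤ ‖x^ω − x‖₂; i.e., the phase selection of the simple Kaczmarz method minimizes the step length among all phase choices. -/

import Mathlib

open scoped BigOperators ComplexConjugate

/-- phase(w) = w/|w| if w ≠ 0, else 1. -/
noncomputable def phase (w : ℂ) : ℂ := if w = 0 then 1 else w / ((‖w‖ : ℝ) : ℂ)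

/-- Euclidean norm of a complex vector. -/
noncomputable def evnorm {ι : Type*} [Fintype ι] (v : ι → ℂ) : ℝ :=
  Real.sqrt (∑ i, ‖v i‖ ^ 2)

/-- Euclidean norm of a real vector. -/
noncomputable def rvnorm {ι : Type*} [Fintype ι] (v : ι → ℝ) : ℝ :=
  Real.sqrt (∑ i, (v i) ^ 2)

/-- Standard Hermitian inner product, conjugate-linear in the first argument. -/
noncomputable def hinner {n : ℕ} (a x : Fin n → ℂ) : ℂ := ∑ i, conj (a i) * x i

/-- dist(x, x̂) = min over unimodular ω of ‖x − ω·x̂‖₂. -/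
noncomputable def pdist {n : ℕ} (x xhat : Fin n → ℂ) : ℝ :=
  ⨅ ω : {ω : ℂ // ‖ω‖ = 1}, evnorm (x - (ω : ℂ) • xhat)

/-- Operator (spectral) norm of a complex matrix w.r.t. Euclidean norms. -/
noncomputable def matOpNorm {ι κ : Type*} [Fintype ι] [Fintype κ] [DecidableEq κ]
    (M : Matrix ι κ ℂ) : ℝ :=
  ‖LinearMap.toContinuousLinearMap (Matrix.toEuclideanLin M)‖

/-! The step is `x^ω - x = ((√y_r ω - ⟨a,x⟩) / ‖a‖²) a`, so its length is proportional to
`|√y_r ω - ⟨a,x⟩|`. Over the unit circle this distance from `⟨a,x⟩` to the circle of radius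
`√y_r` is at least `|√y_r - |⟨a,x⟩||` by the reverse triangle inequality, and the choice
`ω = phase ⟨a,x⟩` attains it. -/

theorem norm_phase (w : ℂ) : ‖phase w‖ = 1 := by
  unfold phase
  split_ifs with hw
  · exact norm_one
  · rw [norm_div, Complex.norm_real, norm_norm, div_self (norm_ne_zero_iff.mpr hw)]

theorem ofReal_norm_mul_phase (w : ℂ) : (‖w‖ : ℂ) * phase w = w := by
  unfold phase
  split_ifs with hw
  · simp [hw]
  · have : ((‖w‖ : ℝ) : ℂ) ≠ 0 := by exact_mod_cast norm_ne_zero_iff.mpr hw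
    field_simp

theorem norm_ofReal_mul_phase_sub (r : ℝ) (c : ℂ) :
    ‖(r : ℂ) * phase c - c‖ = |r - ‖c‖| := by
  have hsplit : (r : ℂ) * phase c - c = ((r - ‖c‖ : ℝ) : ℂ) * phase c := by
    push_cast
    linear_combination ofReal_norm_mul_phase c
  rw [hsplit, norm_mul, norm_phase, mul_one, Complex.norm_real, Real.norm_eq_abs]

theorem norm_ofReal_mul_phase_sub_le {r : ℝ} (hr : 0 ≤ r) (c : ℂ) {ω : ℂ} (hω : ‖ω‖ = 1) :
    ‖(r : ℂ) * phase c - c‖ ≤ ‖(r : ℂ) * ω - c‖ :=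
  calc ‖(r : ℂ) * phase c - c‖ = |‖(r : ℂ) * ω‖ - ‖c‖| := by
        rw [norm_ofReal_mul_phase_sub, norm_mul, hω, mul_one, Complex.norm_of_nonneg hr]
    _ ≤ ‖(r : ℂ) * ω - c‖ := abs_norm_sub_norm_le _ _

theorem evnorm_smul {ι : Type*} [Fintype ι] (s : ℂ) (v : ι → ℂ) :
    evnorm (s • v) = ‖s‖ * evnorm v := by
  have hterm : ∀ i, ‖(s • v) i‖ ^ 2 = ‖s‖ ^ 2 * ‖v i‖ ^ 2 := fun i => by
    rw [Pi.smul_apply, smul_eq_mul, norm_mul, mul_pow]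
  rw [evnorm, Finset.sum_congr rfl fun i _ => hterm i, ← Finset.mul_sum,
    Real.sqrt_mul (by positivity), Real.sqrt_sq (norm_nonneg s), evnorm]

theorem stmt2_general {n : ℕ} (a x : Fin n → ℂ) (yr : ℝ)
    (xstep : ℂ → (Fin n → ℂ))
    (hxstep : ∀ ω : ℂ, xstep ω =
      x + ((((Real.sqrt yr : ℝ) : ℂ) * ω - hinner a x) / ((evnorm a ^ 2 : ℝ) : ℂ)) • a) :
    ∀ ω : ℂ, ‖ω‖ = 1 →
      evnorm (xstep (phase (hinner a x)) - x) ≤ evnorm (xstep ω - x) := by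
  intro ω hω
  have hstep : ∀ μ : ℂ, evnorm (xstep μ - x) =
      ‖(Real.sqrt yr : ℂ) * μ - hinner a x‖ / ‖((evnorm a ^ 2 : ℝ) : ℂ)‖ * evnorm a := by
    intro μ
    rw [hxstep μ, add_sub_cancel_left, evnorm_smul, norm_div]
  rw [hstep, hstep]
  gcongr
  exacts [Real.sqrt_nonneg _, norm_ofReal_mul_phase_sub_le (Real.sqrt_nonneg yr) _ hω]

/-- The phase selection of the simple Kaczmarz method minimizes the
step length among all phase choices. -/
theorem stmt2 {n : ℕ} (a x : Fin n → ℂ) (ha : a ≠ 0) (yr : ℝ) (hyr : 0 ≤ yr)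
    (xstep : ℂ → (Fin n → ℂ))
    (hxstep : ∀ ω : ℂ, xstep ω =
      x + ((((Real.sqrt yr : ℝ) : ℂ) * ω - hinner a x) / ((evnorm a ^ 2 : ℝ) : ℂ)) • a) :
    ∀ ω : ℂ, ‖ω‖ = 1 →
      evnorm (xstep (phase (hinner a x)) - x) ≤ evnorm (xstep ω - x) :=
  stmt2_general a x yr xstep hxstep
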